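/- Let F be a field such that for every proper finite separable extension K/F and every chain of fields F ⊆ F̃ ⊊ K, the set of sums of squares of K is not contained in F̃·K². Let E₀/F be a (possibly infinite) Galois extension such that E₀ is pythagorean. Then every proper finite separable extension of E₀ is non-pythagorean. -/

import Mathlib

/-!
Write `L = E₀(α)` and `K = F(α)`. As `E₀/F` is Galois and `L` is the compositum of `E₀` and `K`,
`L/K` is Galois. If a sum of squares `σ` of `K` were a square `y²` in `L`, every `g ∈ Gal(L/K)`
would send `y` to `±y`; since `g` fixes the powers of `α` and restricts to an automorphism of
`E₀`, it multiplies all `E₀`-coordinates of `y` by that same sign. So for a nonzero coordinate `e`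
both `e²` and `y / e` are fixed by `Gal(L/K)`, and `σ = e² (y / e)²` lies in `(K ∩ E₀) · K²`,
contradicting the hypothesis on `F`.
-/

/-- A field is pythagorean if every sum of squares is a square. -/
def Pythagorean (K : Type) [Field K] : Prop := ∀ a : K, IsSumSq a → IsSquare a

theorem IsSumSq.map {R S G : Type*} [NonAssocSemiring R] [NonAssocSemiring S] [FunLike G R S]
    [RingHomClass G R S] (f : G) {a : R} (h : IsSumSq a) : IsSumSq (f a) := by
  induction h with
  | zero => simp
  | sq_add a _ ih => simpa using IsSumSq.sq_add (f a) ih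

theorem PowerBasis.gen_notMem_range_algebraMap {K L : Type*} [Field K] [Ring L] [Nontrivial L]
    [Algebra K L] (pb : PowerBasis K L) (h : 1 < Module.finrank K L) :
    pb.gen ∉ Set.range (algebraMap K L) := by
  rw [← RingHom.coe_range, SetLike.mem_coe, ← minpoly.natDegree_eq_one_iff, pb.natDegree_minpoly,
    ← pb.finrank]
  exact h.ne'

open IntermediateField

namespace IntermediateField

variable {F L : Type*} [Field F] [Field L] [Algebra F L]

theorem normal_of_sup_eq_top (E K : IntermediateField F L) [Normal F E] (h : E ⊔ K = ⊤) :
    Normal K L := by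
  have hadjoin : adjoin K (E : Set L) = ⊤ := by
    rw [← restrictScalars_eq_top_iff (K := F), restrictScalars_adjoin, adjoin_union, adjoin_self,
      adjoin_self, sup_comm, h]
  have hgen : ∀ x ∈ (E : Set L),
      IsIntegral K x ∧ ((minpoly K x).map (algebraMap K L)).Splits := by
    intro x hx
    let s : E := ⟨x, hx⟩
    have hint : IsIntegral F s := Normal.isIntegral ‹_› s
    have hsplit : (((minpoly F s).map (algebraMap F K)).map (algebraMap K L)).Splits := by
      rw [Polynomial.map_map, ← IsScalarTower.algebraMap_eq,
        IsScalarTower.algebraMap_eq F E L, ← Polynomial.map_map]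
      exact (Normal.splits ‹_› s).map _
    refine ⟨(hint.map (IsScalarTower.toAlgHom F E L)).tower_top,
      hsplit.of_dvd ?_ (Polynomial.map_dvd _ (minpoly.dvd_map_of_isScalarTower' F K L s))⟩
    exact Polynomial.map_ne_zero (Polynomial.map_ne_zero (minpoly.ne_zero hint))
  have hmem (x : L) : x ∈ adjoin K (E : Set L) := hadjoin ▸ mem_top
  have : Algebra.IsAlgebraic K L := ⟨fun x =>
    isAlgebraic_iff.mp ((isAlgebraic_adjoin fun y hy => (hgen y hy).1).isAlgebraic ⟨x, hmem x⟩)⟩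
  exact ⟨fun x => splits_of_mem_adjoin K L hgen (hmem x)⟩

end IntermediateField

section

variable {F E L ι : Type*} [Field F] [Field E] [Field L] [Algebra F E] [Algebra E L] [Algebra F L]
  [IsScalarTower F E L] [Fintype ι]

theorem fieldRange_sup_eq_top_of_basis (b : Module.Basis ι E L) (K : IntermediateField F L)
    (hb : ∀ i, b i ∈ K) : (IsScalarTower.toAlgHom F E L).fieldRange ⊔ K = ⊤ := by
  refine eq_top_iff.mpr fun y _ => b.sum_repr y ▸ sum_mem fun i _ => ?_
  rw [Algebra.smul_def]
  exact mul_mem (le_sup_left (a := (IsScalarTower.toAlgHom F E L).fieldRange) ⟨_, rfl⟩)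
    (le_sup_right (b := K) (hb i))

variable [Normal F E]

theorem Module.Basis.repr_algEquiv_apply (b : Basis ι E L) (g : L ≃ₐ[F] L)
    (hb : ∀ i, g (b i) = b i) (y : L) (i : ι) :
    b.repr (g y) i = g.restrictNormal E (b.repr y i) := by
  have hgy : g y = ∑ i, g.restrictNormal E (b.repr y i) • b i := by
    conv_lhs => rw [← b.sum_repr y]
    simp only [map_sum, Algebra.smul_def, map_mul, hb, AlgEquiv.restrictNormal_commutes]
  rw [hgy, b.repr_sum_self]

theorem isGalois_of_basis_mem [Algebra.IsSeparable F L] (b : Module.Basis ι E L)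
    (K : IntermediateField F L) (hb : ∀ i, b i ∈ K) : IsGalois K L := by
  have : Normal F (IsScalarTower.toAlgHom F E L).fieldRange :=
    Normal.of_algEquiv (AlgEquiv.ofInjectiveField _)
  have : Normal K L := normal_of_sup_eq_top _ K (fieldRange_sup_eq_top_of_basis b K hb)
  have : Algebra.IsSeparable K L := Algebra.isSeparable_tower_top_of_isSeparable F K L
  exact ⟨⟩

theorem exists_sq_eq_mul_sq_of_sq_mem [Algebra.IsSeparable F L] (b : Module.Basis ι E L)
    (K : IntermediateField F L) (hb : ∀ i, b i ∈ K) {y : L} (hy : y ^ 2 ∈ K) :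
    ∃ t ∈ K, t ∈ Set.range (algebraMap E L) ∧ ∃ x ∈ K, y ^ 2 = t * x ^ 2 := by
  obtain rfl | hy0 := eq_or_ne y 0
  · exact ⟨0, zero_mem K, ⟨0, map_zero _⟩, 0, zero_mem K, by ring⟩
  have : IsGalois K L := isGalois_of_basis_mem b K hb
  have mem_of_fixed (z : L) (hz : ∀ g : Gal(L/K), g z = z) : z ∈ K := by
    obtain ⟨k, rfl⟩ := (InfiniteGalois.mem_range_algebraMap_iff_fixed z).mpr hz
    exact k.2
  obtain ⟨j, hj⟩ := Finsupp.ne_iff.mp (b.repr.map_ne_zero_iff.mpr hy0)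
  set e := algebraMap E L (b.repr y j)
  have he : e ≠ 0 := (map_ne_zero _).mpr hj
  have hsign (g : Gal(L/K)) : (g y = y ∧ g e = e) ∨ (g y = -y ∧ g e = -e) := by
    have hcoord : g e = algebraMap E L (b.repr (g y) j) := by
      have h := b.repr_algEquiv_apply (g.restrictScalars F) (fun i => g.commutes ⟨b i, hb i⟩) y j
      rw [AlgEquiv.restrictScalars_apply] at h
      rw [h, AlgEquiv.restrictNormal_commutes]
      rfl
    have hsq : g y ^ 2 = y ^ 2 := by rw [← map_pow]; exact g.commutes ⟨y ^ 2, hy⟩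
    rcases sq_eq_sq_iff_eq_or_eq_neg.mp hsq with h | h
    · exact .inl ⟨h, by rw [hcoord, h]⟩
    · exact .inr ⟨h, by rw [hcoord, h, map_neg, Finsupp.neg_apply, map_neg]⟩
  refine ⟨e ^ 2, mem_of_fixed _ fun g => ?_, ⟨_, map_pow _ _ _⟩, y / e,
    mem_of_fixed _ fun g => ?_, by field_simp⟩
  · rcases hsign g with ⟨-, h⟩ | ⟨-, h⟩ <;> simp [h]
  · rcases hsign g with ⟨h, h'⟩ | ⟨h, h'⟩ <;> simp [h, h', neg_div_neg_eq]

end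

theorem stmt_5_general (F : Type) [Field F]
    (hF : ∀ (K : Type) [Field K] [Algebra F K] [FiniteDimensional F K]
      [Algebra.IsSeparable F K], 1 < Module.finrank F K →
      ∀ Ft : IntermediateField F K, Ft ≠ ⊤ →
      ∃ σ : K, IsSumSq σ ∧ ∀ t ∈ Ft, ∀ x : K, σ ≠ t * x ^ 2)
    (E₀ : Type) [Field E₀] [Algebra F E₀] [IsGalois F E₀] :
    ∀ (L : Type) [Field L] [Algebra E₀ L] [FiniteDimensional E₀ L]
      [Algebra.IsSeparable E₀ L], 1 < Module.finrank E₀ L → ¬ Pythagorean L := by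
  intro L _ _ _ _ hL hpythL
  let _ : Algebra F L := ((algebraMap E₀ L).comp (algebraMap F E₀)).toAlgebra
  have : IsScalarTower F E₀ L := .of_algebraMap_eq fun _ => rfl
  have : Algebra.IsSeparable F L := .trans F E₀ L
  let pb := Field.powerBasisOfFiniteOfSeparable E₀ L
  let K := F⟮pb.gen⟯
  have : FiniteDimensional F K := adjoin.finiteDimensional (Algebra.IsSeparable.isIntegral F _)
  have : Algebra.IsSeparable F K := Algebra.isSeparable_tower_bot_of_isSeparable F K L
  have hb (i : Fin pb.dim) : pb.basis i ∈ K := by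
    rw [pb.coe_basis]
    exact pow_mem (mem_adjoin_simple_self F _) _
  let Ft : IntermediateField F K := (IsScalarTower.toAlgHom F E₀ L).fieldRange.comap K.val
  have hFt : Ft ≠ ⊤ := fun h => pb.gen_notMem_range_algebraMap hL <|
    (h ▸ mem_top : (⟨pb.gen, mem_adjoin_simple_self F _⟩ : K) ∈ Ft)
  have hK : 1 < Module.finrank F K := by
    refine lt_of_le_of_ne Module.finrank_pos fun h => hFt (eq_top_iff.mpr ?_)
    exact (bot_eq_top_iff_finrank_eq_one.mpr h.symm) ▸ bot_le
  obtain ⟨σ, hσ, hσFt⟩ := hF K hK Ft hFt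
  obtain ⟨y, hy⟩ := hpythL _ (hσ.map (algebraMap K L))
  obtain ⟨t, htK, htE, x, hxK, hyt⟩ :=
    exists_sq_eq_mul_sq_of_sq_mem pb.basis K hb (y := y) (by rw [sq, ← hy]; exact σ.2)
  exact hσFt ⟨t, htK⟩ htE ⟨x, hxK⟩ (Subtype.ext (hy.trans ((sq y).symm.trans hyt)))

/-- Suppose for every proper finite separable extension `K/F` and every chain
`F ⊆ F̃ ⊊ K` we have `ΣK² ⊄ F̃K²`.  If `E₀/F` is a (possibly infinite) Galois extension and
`E₀` is pythagorean, then every proper finite separable extension of `E₀` is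
non-pythagorean. -/
theorem stmt_5 (F : Type) [Field F]
    (hF : ∀ (K : Type) [Field K] [Algebra F K] [FiniteDimensional F K]
      [Algebra.IsSeparable F K], 1 < Module.finrank F K →
      ∀ Ft : IntermediateField F K, Ft ≠ ⊤ →
      ∃ σ : K, IsSumSq σ ∧ ∀ t ∈ Ft, ∀ x : K, σ ≠ t * x ^ 2)
    (E₀ : Type) [Field E₀] [Algebra F E₀] [IsGalois F E₀] (hpyth : Pythagorean E₀) :
    ∀ (L : Type) [Field L] [Algebra E₀ L] [FiniteDimensional E₀ L]
      [Algebra.IsSeparable E₀ L], 1 < Module.finrank E₀ L → ¬ Pythagorean L :=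
  stmt_5_general F hF E₀
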